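/- Let w be a finite word over Σ₃. If w is poor, then the word f(w)·0 (the image of w under f followed by the letter 0) is poor. -/
import Mathlib


abbrev Word := List (Fin 3)
abbrev InfWord := ℕ → Fin 3

/-- `u` is a (finite, contiguous) factor of the infinite word `w`. -/
def IsFactor (w : InfWord) (u : Word) : Prop :=
  ∃ i : ℕ, u = (List.range u.length).map fun k => w (i + k)

/-- `u` is a prefix of the infinite word `z`. -/
def IsPrefixInf (u : Word) (z : InfWord) : Prop :=
  u = (List.range u.length).map z

/-- `p` is a period of the finite word `w`. -/
def HasPeriod (w : Word) (p : ℕ) : Prop :=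
  0 < p ∧ p ≤ w.length ∧ ∀ i : ℕ, i + p < w.length → w.getD (i + p) 0 = w.getD i 0

/-- The infinite word `w` is `α`-power-free: it has no nonempty factor `u`
with a period `p` satisfying `|u|/p ≥ α`. -/
def PowerFree (α : ℚ) (w : InfWord) : Prop :=
  ∀ (u : Word) (p : ℕ), IsFactor w u → u ≠ [] → HasPeriod u p →
    (u.length : ℚ) / (p : ℚ) < α

/-- The set of palindromic factors of a finite word. -/
def palSet (w : Word) : Set Word := {u | u <:+: w ∧ u.reverse = u}

/-- A finite word of length `n` is rich if it has exactly `n + 1`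
distinct palindromic factors (including the empty word). -/
def RichWord (w : Word) : Prop := (palSet w).ncard = w.length + 1

/-- An infinite word is rich if all of its finite factors are rich. -/
def RichSeq (z : InfWord) : Prop := ∀ u : Word, IsFactor z u → RichWord u

def fm : Fin 3 → Word := ![[0, 1], [0, 2, 2], [0, 2]]
def gm : Fin 3 → Word := ![[2, 0], [2, 1], [2]]
def t1 : Fin 3 → Word :=
  ![[0, 0, 1], [0, 0, 1, 0, 1, 1, 0, 1],
    [0, 0, 1, 0, 1, 1, 0, 1, 0, 0, 1, 0, 1, 1, 0, 1]]
def t2 : Fin 3 → Word :=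
  ![[0, 0, 2], [0, 0, 2, 0, 2, 2, 0, 2],
    [0, 0, 2, 0, 2, 2, 0, 2, 0, 0, 2, 0, 2, 2, 0, 2]]

/-- The morphism `f` on finite words. -/
def fList (w : Word) : Word := w.flatMap fm
/-- The morphism `g` on finite words. -/
def gList (w : Word) : Word := w.flatMap gm

def tauAux : Bool → Word → Word
  | _, [] => []
  | b, a :: w => (if b then t1 a else t2 a) ++ tauAux (!b) w

/-- The transducer `τ` on finite words: `t1` is applied to even-indexed letters
and `t2` to odd-indexed letters. -/
def tauList (w : Word) : Word := tauAux true w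

/-- The morphism `f` on infinite words. -/
def fInf (x : InfWord) : InfWord :=
  fun i => (fList ((List.range (i + 1)).map x)).getD i 0
/-- The morphism `g` on infinite words. -/
def gInf (x : InfWord) : InfWord :=
  fun i => (gList ((List.range (i + 1)).map x)).getD i 0
/-- The transducer `τ` on infinite words. -/
def tauInf (x : InfWord) : InfWord :=
  fun i => (tauList ((List.range (i + 1)).map x)).getD i 0

/-- The critical exponent of an infinite word. -/
noncomputable def criticalExponent (z : InfWord) : ℝ :=
  sSup {r : ℝ | ∃ (u : Word) (p : ℕ), IsFactor z u ∧ u ≠ [] ∧ HasPeriod u p ∧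
    r = (u.length : ℝ) / (p : ℝ)}
/-- A word `w` is poor if every palindromic prefix of `w` with an even number of
`2`'s occurs again in `w` preceded by a nonempty word with an even number of `2`'s. -/
def Poor (w : Word) : Prop :=
  ∀ u : Word, u <+: w → u.reverse = u → u.count 2 % 2 = 0 →
    ∃ p s : Word, w = p ++ u ++ s ∧ p ≠ [] ∧ p.count 2 % 2 = 0

lemma fList_cons (a : Fin 3) (t : Word) : fList (a :: t) = fm a ++ fList t := rfl

lemma fList_append (u v : Word) : fList (u ++ v) = fList u ++ fList v := by
  simp [fList]

lemma fList_zero_or (u : Word) : fList u = [] ∨ ∃ r, fList u = 0 :: r := by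
  cases u with
  | nil => exact Or.inl rfl
  | cons c s =>
    right
    rw [fList_cons]
    fin_cases c
    · exact ⟨1 :: fList s, rfl⟩
    · exact ⟨2 :: 2 :: fList s, rfl⟩
    · exact ⟨2 :: fList s, rfl⟩

lemma exists_head0 (u : Word) : ∃ r, fList u ++ [0] = 0 :: r := by
  rcases fList_zero_or u with h | ⟨r, h⟩
  · exact ⟨[], by rw [h]; rfl⟩
  · exact ⟨r ++ [0], by rw [h]; rfl⟩

lemma key_pal (a : Fin 3) : [(0 : Fin 3)] ++ (fm a).reverse = fm a ++ [0] := by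
  fin_cases a <;> rfl

lemma fList_reverse (u : Word) : (fList u ++ [0]).reverse = fList u.reverse ++ [0] := by
  induction u with
  | nil => rfl
  | cons a t ih =>
    rw [fList_cons, List.append_assoc, List.reverse_append, ih, List.reverse_cons,
      fList_append]
    have h1 : fList [a] = fm a := by simp [fList]
    rw [h1, List.append_assoc, List.append_assoc, ← key_pal a]

lemma fList_inj : ∀ u v : Word, fList u = fList v → u = v := by
  intro u
  induction u with
  | nil =>
    intro v h
    cases v with
    | nil => rfl
    | cons b t =>
      exfalso
      rw [fList_cons] at h
      fin_cases b <;> simp [fm, fList] at h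
  | cons a s ih =>
    intro v h
    cases v with
    | nil =>
      exfalso
      rw [fList_cons] at h
      fin_cases a <;> simp [fm, fList] at h
    | cons b t =>
      rw [fList_cons, fList_cons] at h
      have hab : a = b ∧ fList s = fList t := by
        rcases fList_zero_or s with hs | ⟨rs, hrs⟩ <;>
          rcases fList_zero_or t with ht | ⟨rt, hrt⟩
        · rw [hs, ht] at h ⊢; fin_cases a <;> fin_cases b <;> simp_all [fm]
        · rw [hs, hrt] at h ⊢; fin_cases a <;> fin_cases b <;> simp_all [fm]
        · rw [hrs, ht] at h ⊢; fin_cases a <;> fin_cases b <;> simp_all [fm]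
        · rw [hrs, hrt] at h ⊢; fin_cases a <;> fin_cases b <;> simp_all [fm]
      rw [hab.1, ih t hab.2]

lemma fList_count2 (u : Word) : (fList u).count 2 % 2 = u.count 2 % 2 := by
  induction u with
  | nil => rfl
  | cons a t ih =>
    rw [fList_cons, List.count_append, List.count_cons]
    fin_cases a <;> simp [fm] <;> omega

lemma fList_ne_nil {u : Word} (h : u ≠ []) : fList u ≠ [] := by
  cases u with
  | nil => exact absurd rfl h
  | cons a t =>
    rw [fList_cons]
    fin_cases a <;> simp [fm]

lemma lemA : ∀ (w V : Word), V ++ [0] <+: fList w ++ [0] → ∃ u, u <+: w ∧ V = fList u := by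
  intro w
  induction w with
  | nil =>
    intro V h
    cases V with
    | nil => exact ⟨[], List.nil_prefix, rfl⟩
    | cons x V' =>
      exfalso
      have hl := h.length_le
      simp [fList] at hl
  | cons a t ih =>
    intro V h
    cases V with
    | nil => exact ⟨[], List.nil_prefix, rfl⟩
    | cons x V' =>
      obtain ⟨r, hr⟩ := h
      rw [fList_cons] at hr
      fin_cases a
      · replace hr : x :: V' ++ [0] ++ r = 0 :: 1 :: (fList t ++ [0]) := hr
        cases V' with
        | nil => simp at hr
        | cons y V'' =>
          simp only [List.cons_append, List.append_assoc] at hr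
          rw [List.cons.injEq, List.cons.injEq] at hr
          obtain ⟨hx, hy, hr2⟩ := hr
          obtain ⟨u, hu, hVu⟩ := ih V'' ⟨r, by rw [List.append_assoc]; exact hr2⟩
          exact ⟨0 :: u, List.cons_prefix_cons.mpr ⟨rfl, hu⟩, by
            subst hx hy hVu; rfl⟩
      · replace hr : x :: V' ++ [0] ++ r = 0 :: 2 :: 2 :: (fList t ++ [0]) := hr
        cases V' with
        | nil => simp at hr
        | cons y V'' =>
          cases V'' with
          | nil => simp at hr
          | cons z V''' =>
            simp only [List.cons_append, List.append_assoc] at hr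
            rw [List.cons.injEq, List.cons.injEq, List.cons.injEq] at hr
            obtain ⟨hx, hy, hz, hr2⟩ := hr
            obtain ⟨u, hu, hVu⟩ := ih V''' ⟨r, by rw [List.append_assoc]; exact hr2⟩
            exact ⟨1 :: u, List.cons_prefix_cons.mpr ⟨rfl, hu⟩, by
              subst hx hy hz hVu; rfl⟩
      · replace hr : x :: V' ++ [0] ++ r = 0 :: 2 :: (fList t ++ [0]) := hr
        cases V' with
        | nil => simp at hr
        | cons y V'' =>
          simp only [List.cons_append, List.append_assoc] at hr
          rw [List.cons.injEq, List.cons.injEq] at hr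
          obtain ⟨hx, hy, hr2⟩ := hr
          obtain ⟨u, hu, hVu⟩ := ih V'' ⟨r, by rw [List.append_assoc]; exact hr2⟩
          exact ⟨2 :: u, List.cons_prefix_cons.mpr ⟨rfl, hu⟩, by
            subst hx hy hVu; rfl⟩


/-- If `w` is poor, then `f(w)·0` is poor. -/
theorem poor_to_poor (w : Word) (hw : Poor w) : Poor (fList w ++ [0]) := by
  intro U hU hpal hcount
  obtain ⟨r0, hr0⟩ := exists_head0 w
  cases U with
  | nil =>
    exact ⟨[0], r0, by simpa using hr0, by simp, by simp⟩
  | cons x U' =>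
    have hx : x = 0 := by
      obtain ⟨r, hr⟩ := hU
      rw [hr0] at hr
      simp only [List.cons_append, List.cons.injEq] at hr
      exact hr.1
    subst hx
    have hV : (0 : Fin 3) :: U' = U'.reverse ++ [0] := by
      conv_lhs => rw [← hpal]
      simp
    obtain ⟨u, hu, hVu⟩ := lemA w U'.reverse (hV ▸ hU)
    have hU_eq : (0 : Fin 3) :: U' = fList u ++ [0] := by rw [hV, hVu]
    have hupal : u.reverse = u := by
      apply fList_inj
      have h1 : fList u.reverse ++ [0] = fList u ++ [0] := by
        rw [← fList_reverse, ← hU_eq, hpal, hU_eq]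
      simpa using h1
    have hcnt : u.count 2 % 2 = 0 := by
      rw [← fList_count2]
      have h2 := congrArg (List.count 2) hU_eq
      rw [List.count_append, List.count_cons] at h2
      simp at h2
      simp [List.count_cons] at hcount
      omega
    obtain ⟨p, s, hw_eq, hp, hpc⟩ := hw u hu hupal hcnt
    obtain ⟨r1, hr1⟩ := exists_head0 s
    refine ⟨fList p, r1, ?_, fList_ne_nil hp, by rw [fList_count2]; exact hpc⟩
    rw [hw_eq, fList_append, fList_append, hU_eq]
    rw [List.append_assoc, List.append_assoc, List.append_assoc, hr1]
    simp
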